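/- arXiv:1403.7320 — 2 statements merged into one kernel-verified Lean document; each statement's English description precedes it below -/
import Mathlib

section
/- For every c ∈ F, the linear map sending a trace-zero (n+1)×(n+1) matrix E = (e_{i,j}) over F to the endomorphism Σ_{i,j=1}^{n+1} e_{i,j}·Q_{i,j} of A is a homomorphism of Lie algebras from sl(n+1,F) to the Lie algebra of F-linear endomorphisms of A (with commutator bracket); in particular E_{n,n} − E_{n+1,n+1} is sent to D̃ + (c−n1)·id + x_n∂_n. -/
open MvPolynomial

attribute [local instance 100] LieRing.ofAssociativeRing

/-- Multiplication by `x i` as an `F`-linear endomorphism of `A = F[x_1,…,x_n]`. -/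
noncomputable def mulX (F : Type*) [Field F] (n : ℕ) (i : Fin n) :
    Module.End F (MvPolynomial (Fin n) F) :=
  LinearMap.mulLeft F (X i)

/-- The partial derivative `∂_i` as an `F`-linear endomorphism of `A`. -/
noncomputable def pd (F : Type*) [Field F] (n : ℕ) (i : Fin n) :
    Module.End F (MvPolynomial (Fin n) F) :=
  (pderiv i).toLinearMap

/-- The twisted Euler operator `D̃ = Σ_{r>n1} x_r ∂_r − Σ_{i≤n1} x_i ∂_i`
(indices `0,…,n1-1` correspond to the paper's swapped indices `1,…,n1`). -/
noncomputable def Dt (F : Type*) [Field F] (n n1 : ℕ) :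
    Module.End F (MvPolynomial (Fin n) F) :=
  ∑ r : Fin n, if (r : ℕ) < n1 then -(mulX F n r * pd F n r) else mulX F n r * pd F n r

/-- The twisted projective oscillator operators `Q_{i,j}` attached to the swapped
index set `S = {1,…,n1}`; index `n` plays the role of the paper's index `n+1`. -/
noncomputable def Q (F : Type*) [Field F] (n n1 : ℕ) (c : F) (i j : Fin (n + 1)) :
    Module.End F (MvPolynomial (Fin n) F) :=
  if hi : (i : ℕ) < n then
    if hj : (j : ℕ) < n then
      if (i : ℕ) < n1 then
        if (j : ℕ) < n1 then
          -(mulX F n ⟨j, hj⟩ * pd F n ⟨i, hi⟩) - (if i = j then 1 else 0)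
        else pd F n ⟨i, hi⟩ * pd F n ⟨j, hj⟩
      else
        if (j : ℕ) < n1 then -(mulX F n ⟨i, hi⟩ * mulX F n ⟨j, hj⟩)
        else mulX F n ⟨i, hi⟩ * pd F n ⟨j, hj⟩
    else
      if (i : ℕ) < n1 then (Dt F n n1 + (c - n1 - 1) • 1) * pd F n ⟨i, hi⟩
      else mulX F n ⟨i, hi⟩ * (Dt F n n1 + (c - n1) • 1)
  else
    if hj : (j : ℕ) < n then
      if (j : ℕ) < n1 then mulX F n ⟨j, hj⟩
      else -pd F n ⟨j, hj⟩
    else -(Dt F n n1 + (c - n1) • 1)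


section Aux

variable (F : Type*) [Field F] (n n1 : ℕ) (c : F)

lemma pd_apply (i : Fin n) (p : MvPolynomial (Fin n) F) : pd F n i p = pderiv i p := rfl

lemma mulX_apply (i : Fin n) (p : MvPolynomial (Fin n) F) : mulX F n i p = X i * p := rfl

lemma mulX_comm (i j : Fin n) : mulX F n i * mulX F n j = mulX F n j * mulX F n i := by
  apply LinearMap.ext; intro p
  simp only [Module.End.mul_apply, mulX_apply]
  ring

lemma pd_comm (i j : Fin n) : pd F n i * pd F n j = pd F n j * pd F n i := by
  apply LinearMap.ext; intro p
  simp only [Module.End.mul_apply, pd_apply]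
  induction p using MvPolynomial.induction_on' with
  | add p q hp hq => simp [hp, hq]
  | monomial s a =>
    rcases eq_or_ne i j with rfl | h
    · rfl
    · simp only [pderiv_monomial]
      rw [tsub_right_comm]
      congr 1
      simp only [Finsupp.tsub_apply, Finsupp.single_eq_of_ne h,
        Finsupp.single_eq_of_ne (Ne.symm h), tsub_zero]
      push_cast; ring

lemma pd_mul_mulX (i j : Fin n) :
    pd F n i * mulX F n j = mulX F n j * pd F n i + (if i = j then 1 else 0) := by
  apply LinearMap.ext; intro p
  rcases eq_or_ne i j with rfl | h
  · simp only [Module.End.mul_apply, LinearMap.add_apply, pd_apply, mulX_apply,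
      eq_self_iff_true, if_true, Module.End.one_apply, pderiv_mul, pderiv_X_self, one_mul]
    ring
  · simp only [Module.End.mul_apply, LinearMap.add_apply, pd_apply, mulX_apply, if_neg h,
      LinearMap.zero_apply, pderiv_mul, pderiv_X_of_ne (Ne.symm h), zero_mul, zero_add, add_zero]

lemma mulX_pd_mul_mulX (r i : Fin n) :
    (mulX F n r * pd F n r) * mulX F n i
      = mulX F n i * (mulX F n r * pd F n r) + (if r = i then mulX F n i else 0) := by
  rw [mul_assoc, pd_mul_mulX]
  rcases eq_or_ne r i with rfl | h
  · rw [if_pos rfl, if_pos rfl, mul_add, mul_one, ← mul_assoc]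
  · rw [if_neg h, if_neg h, add_zero, add_zero, ← mul_assoc, mulX_comm F n r i, mul_assoc]

lemma mulX_pd_mul_pd (r i : Fin n) :
    (mulX F n r * pd F n r) * pd F n i
      = pd F n i * (mulX F n r * pd F n r) - (if r = i then pd F n i else 0) := by
  have h1 : pd F n i * (mulX F n r * pd F n r)
      = mulX F n r * (pd F n i * pd F n r) + (if r = i then pd F n i else 0) := by
    rw [← mul_assoc, pd_mul_mulX, add_mul, mul_assoc]
    rcases eq_or_ne r i with rfl | h
    · rw [if_pos rfl, if_pos rfl, one_mul]
    · rw [if_neg (Ne.symm h), if_neg h, zero_mul]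
  rw [h1, pd_comm F n i r, add_sub_cancel_right, mul_assoc]


lemma negStep {R : Type*} [Ring R] {a m d : R} (h : a * m = m * a + d) :
    -a * m = m * -a + -d := by
  rw [neg_mul, h, neg_add, mul_neg]

lemma negStep0 {R : Type*} [Ring R] {a m : R} (h : a * m = m * a) : -a * m = m * -a := by
  rw [neg_mul, h, mul_neg]

lemma negStepSub {R : Type*} [Ring R] {a m d : R} (h : a * m = m * a - d) :
    -a * m = m * -a + d := by
  rw [neg_mul, h, mul_neg]; abel

lemma stepSubNeg {R : Type*} [Ring R] {a m d : R} (h : a * m = m * a - d) :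
    a * m = m * a + -d := by
  rw [h, sub_eq_add_neg]

lemma negflip {R : Type*} [Ring R] {p m d : R} (h : p * m = m * p + d) :
    -(m * p) - d = p * -m := by
  rw [mul_neg, h, neg_add, sub_eq_add_neg]

lemma negflip0 {R : Type*} [Ring R] {p m : R} (h : p * m = m * p) : -(m * p) = p * -m := by
  rw [mul_neg, h]

lemma negOneComm {R : Type*} [Ring R] (a : R) : a * -1 = -1 * a := by
  rw [mul_neg_one, neg_one_mul]

lemma negOneNeg {R : Type*} [Ring R] (a : R) : a = -1 * -a := by
  rw [neg_one_mul, neg_neg]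

lemma negOneMul' {R : Type*} [Ring R] (a : R) : -a = -1 * a := by
  rw [neg_one_mul]

lemma Dt_mul_mulX (i : Fin n) :
    Dt F n n1 * mulX F n i
      = mulX F n i * Dt F n n1 + (if (i : ℕ) < n1 then -(mulX F n i) else mulX F n i) := by
  unfold Dt
  rw [Finset.sum_mul, Finset.mul_sum]
  have step : ∀ r : Fin n,
      (if (r : ℕ) < n1 then -(mulX F n r * pd F n r) else mulX F n r * pd F n r) * mulX F n i
        = mulX F n i * (if (r : ℕ) < n1 then -(mulX F n r * pd F n r) else mulX F n r * pd F n r)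
          + (if r = i then (if (i : ℕ) < n1 then -(mulX F n i) else mulX F n i) else 0) := by
    intro r
    have base := mulX_pd_mul_mulX F n r i
    rcases eq_or_ne r i with rfl | h
    · rw [if_pos rfl] at base ⊢
      split_ifs with h1
      · exact negStep base
      · exact base
    · rw [if_neg h, add_zero] at base ⊢
      split_ifs with h1
      · exact negStep0 base
      · exact base
  rw [Finset.sum_congr rfl fun r _ => step r, Finset.sum_add_distrib, Finset.sum_ite_eq']
  simp

lemma Dt_mul_pd (i : Fin n) :
    Dt F n n1 * pd F n i
      = pd F n i * Dt F n n1 + (if (i : ℕ) < n1 then pd F n i else -(pd F n i)) := by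
  unfold Dt
  rw [Finset.sum_mul, Finset.mul_sum]
  have step : ∀ r : Fin n,
      (if (r : ℕ) < n1 then -(mulX F n r * pd F n r) else mulX F n r * pd F n r) * pd F n i
        = pd F n i * (if (r : ℕ) < n1 then -(mulX F n r * pd F n r) else mulX F n r * pd F n r)
          + (if r = i then (if (i : ℕ) < n1 then pd F n i else -(pd F n i)) else 0) := by
    intro r
    have base := mulX_pd_mul_pd F n r i
    rcases eq_or_ne r i with rfl | h
    · rw [if_pos rfl] at base ⊢
      split_ifs with h1
      · exact negStepSub base
      · exact stepSubNeg base
    · rw [if_neg h, sub_zero] at base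
      rw [if_neg h, add_zero]
      split_ifs with h1
      · exact negStep0 base
      · exact base
  rw [Finset.sum_congr rfl fun r _ => step r, Finset.sum_add_distrib, Finset.sum_ite_eq']
  simp

/-- The "row" factor `X̂`. -/
noncomputable def Xh (i : Fin (n + 1)) : Module.End F (MvPolynomial (Fin n) F) :=
  if h : (i : ℕ) < n then (if (i : ℕ) < n1 then pd F n ⟨i, h⟩ else mulX F n ⟨i, h⟩) else -1

/-- The "column" factor `Ŷ`. -/
noncomputable def Yh (j : Fin (n + 1)) : Module.End F (MvPolynomial (Fin n) F) :=
  if h : (j : ℕ) < n then (if (j : ℕ) < n1 then -(mulX F n ⟨j, h⟩) else pd F n ⟨j, h⟩)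
  else Dt F n n1 + (c - n1) • 1

lemma negStepR {R : Type*} [Ring R] {z m d : R} (h : z * m = m * z + d) :
    z * -m = -m * z + -d := by
  rw [mul_neg, h, neg_add, neg_mul]

lemma negNegComm {R : Type*} [Ring R] {a b : R} (h : a * b = b * a) : -a * -b = -b * -a := by
  rw [neg_mul_neg, neg_mul_neg, h]

lemma d_conv {i j : Fin (n + 1)} (hi : (i : ℕ) < n) (hj : (j : ℕ) < n) :
    (if (⟨i, hi⟩ : Fin n) = ⟨j, hj⟩ then (1 : Module.End F (MvPolynomial (Fin n) F)) else 0)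
      = if i = j then 1 else 0 :=
  if_congr (by simp [Fin.ext_iff]) rfl rfl

lemma euler_top_pd (i : Fin n) (hi : (i : ℕ) < n1) :
    (Dt F n n1 + (c - n1 - 1) • 1) * pd F n i = pd F n i * (Dt F n n1 + (c - n1) • 1) := by
  rw [add_mul, mul_add, Dt_mul_pd, if_pos hi, smul_mul_assoc, one_mul, mul_smul_comm, mul_one]
  have : (c - (n1 : F)) = (c - n1 - 1) + 1 := by ring
  rw [this, add_smul, one_smul]
  abel

lemma Q_eq (i j : Fin (n + 1)) : Q F n n1 c i j = Xh F n n1 i * Yh F n n1 c j := by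
  unfold Q Xh Yh
  by_cases hi : (i : ℕ) < n <;> by_cases hj : (j : ℕ) < n <;>
    simp only [hi, hj, dif_pos, dif_neg, not_false_iff]
  · by_cases h1 : (i : ℕ) < n1 <;> by_cases h2 : (j : ℕ) < n1 <;>
      simp only [h1, h2, if_true, if_false]
    · have base := pd_mul_mulX F n ⟨i, hi⟩ ⟨j, hj⟩
      rw [d_conv F n hi hj] at base
      exact negflip base
    · exact (mul_neg (mulX F n ⟨i, hi⟩) (mulX F n ⟨j, hj⟩)).symm
  · by_cases h1 : (i : ℕ) < n1 <;> simp only [h1, if_true, if_false]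
    exact euler_top_pd F n n1 c ⟨i, hi⟩ h1
  · by_cases h1 : (j : ℕ) < n1 <;> simp only [h1, if_true, if_false]
    · exact negOneNeg _
    · exact negOneMul' _
  · exact negOneMul' _

lemma Xh_mul_Xh (i k : Fin (n + 1)) :
    Xh F n n1 i * Xh F n n1 k = Xh F n n1 k * Xh F n n1 i := by
  unfold Xh
  by_cases hi : (i : ℕ) < n <;> by_cases hk : (k : ℕ) < n <;>
    simp only [hi, hk, dif_pos, dif_neg, not_false_iff]
  · by_cases h1 : (i : ℕ) < n1 <;> by_cases h2 : (k : ℕ) < n1 <;>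
      simp only [h1, h2, if_true, if_false]
    · exact pd_comm F n _ _
    · rw [pd_mul_mulX, if_neg (show ¬(⟨(i : ℕ), hi⟩ : Fin n) = ⟨k, hk⟩ by
        simp only [Fin.mk.injEq]; omega), add_zero]
    · rw [pd_mul_mulX, if_neg (show ¬(⟨(k : ℕ), hk⟩ : Fin n) = ⟨i, hi⟩ by
        simp only [Fin.mk.injEq]; omega), add_zero]
    · exact mulX_comm F n _ _
  all_goals first
    | rfl
    | exact negOneComm _
    | exact (negOneComm _).symm

lemma Yh_mul_Xh_lt (j k : Fin (n + 1)) (hj : (j : ℕ) < n) :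
    Yh F n n1 c j * Xh F n n1 k
      = Xh F n n1 k * Yh F n n1 c j + (if j = k then 1 else 0) := by
  unfold Xh Yh
  by_cases hk : (k : ℕ) < n
  · simp only [hj, hk, dif_pos]
    by_cases h1 : (j : ℕ) < n1 <;> by_cases h2 : (k : ℕ) < n1 <;>
      simp only [h1, h2, if_true, if_false]
    · have base := pd_mul_mulX F n ⟨k, hk⟩ ⟨j, hj⟩
      rw [d_conv F n hk hj] at base
      have base2 := eq_sub_of_add_eq base.symm
      have goal := negStepSub base2
      rw [show (if (k : Fin (n + 1)) = j then (1 : Module.End F (MvPolynomial (Fin n) F))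
        else 0) = if j = k then 1 else 0 from if_congr eq_comm rfl rfl] at goal
      exact goal
    · rw [if_neg (show j ≠ k from fun hc => h2 (hc ▸ h1)), add_zero]
      exact negStep0 (mulX_comm F n ⟨j, hj⟩ ⟨k, hk⟩)
    · rw [if_neg (show j ≠ k from fun hc => h1 (hc ▸ h2)), add_zero]
      exact pd_comm F n _ _
    · have base := pd_mul_mulX F n ⟨j, hj⟩ ⟨k, hk⟩
      rw [d_conv F n hj hk] at base
      exact base
  · simp only [hj, hk, dif_pos, dif_neg, not_false_iff]
    rw [if_neg (show j ≠ k from fun hc => hk (hc ▸ hj)), add_zero]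
    exact negOneComm _

lemma Yh_mul_Xh_top (j k : Fin (n + 1)) (hj : ¬ (j : ℕ) < n) (hk : (k : ℕ) < n) :
    Yh F n n1 c j * Xh F n n1 k
      = Xh F n n1 k * Yh F n n1 c j + Xh F n n1 k := by
  unfold Xh Yh
  simp only [hj, hk, dif_pos, dif_neg, not_false_iff]
  by_cases h1 : (k : ℕ) < n1 <;> simp only [h1, if_true, if_false]
  · rw [add_mul, mul_add, Dt_mul_pd, if_pos h1, smul_mul_assoc, one_mul, mul_smul_comm, mul_one]
    abel
  · rw [add_mul, mul_add, Dt_mul_mulX, if_neg h1, smul_mul_assoc, one_mul, mul_smul_comm,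
      mul_one]
    abel

lemma Yh_mul_Xh_right_top (j k : Fin (n + 1)) (hk : ¬ (k : ℕ) < n) :
    Yh F n n1 c j * Xh F n n1 k = Xh F n n1 k * Yh F n n1 c j := by
  unfold Xh
  rw [dif_neg hk]
  exact negOneComm _

lemma Yh_mul_Yh_lt (j l : Fin (n + 1)) (hj : (j : ℕ) < n) (hl : (l : ℕ) < n) :
    Yh F n n1 c j * Yh F n n1 c l = Yh F n n1 c l * Yh F n n1 c j + 0 := by
  rw [add_zero]
  unfold Yh
  simp only [hj, hl, dif_pos]
  by_cases h1 : (j : ℕ) < n1 <;> by_cases h2 : (l : ℕ) < n1 <;>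
    simp only [h1, h2, if_true, if_false]
  · exact negNegComm (mulX_comm F n _ _)
  · have base0 : pd F n ⟨l, hl⟩ * mulX F n ⟨j, hj⟩ = mulX F n ⟨j, hj⟩ * pd F n ⟨l, hl⟩ := by
      rw [pd_mul_mulX, if_neg (show ¬(⟨(l : ℕ), hl⟩ : Fin n) = ⟨j, hj⟩ by
        simp only [Fin.mk.injEq]; omega), add_zero]
    exact negStep0 base0.symm
  · have base0 : pd F n ⟨j, hj⟩ * mulX F n ⟨l, hl⟩ = mulX F n ⟨l, hl⟩ * pd F n ⟨j, hj⟩ := by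
      rw [pd_mul_mulX, if_neg (show ¬(⟨(j : ℕ), hj⟩ : Fin n) = ⟨l, hl⟩ by
        simp only [Fin.mk.injEq]; omega), add_zero]
    exact (negStep0 base0.symm).symm
  · exact pd_comm F n _ _

lemma Yh_mul_Yh_top (j l : Fin (n + 1)) (hj : ¬ (j : ℕ) < n) (hl : (l : ℕ) < n) :
    Yh F n n1 c j * Yh F n n1 c l
      = Yh F n n1 c l * Yh F n n1 c j + -(Yh F n n1 c l) := by
  unfold Yh
  simp only [hj, hl, dif_pos, dif_neg, not_false_iff]
  by_cases h1 : (l : ℕ) < n1 <;> simp only [h1, if_true, if_false]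
  · have base : (Dt F n n1 + (c - (n1 : F)) • 1) * mulX F n ⟨l, hl⟩
        = mulX F n ⟨l, hl⟩ * (Dt F n n1 + (c - (n1 : F)) • 1) + -(mulX F n ⟨l, hl⟩) := by
      rw [add_mul, mul_add, Dt_mul_mulX, if_pos h1, smul_mul_assoc, one_mul, mul_smul_comm,
        mul_one]
      abel
    exact negStepR base
  · rw [add_mul, mul_add, Dt_mul_pd, if_neg h1, smul_mul_assoc, one_mul, mul_smul_comm, mul_one]
    abel

lemma fin_eq_top {a b : Fin (n + 1)} (ha : ¬ (a : ℕ) < n) (hb : ¬ (b : ℕ) < n) : a = b :=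
  Fin.ext (by have := a.isLt; have := b.isLt; omega)

lemma ring_calc {R : Type*} [Ring R] (x1 y1 x2 y2 d1 d2 e : R)
    (h1 : y1 * x2 = x2 * y1 + d1) (h2 : y2 * x1 = x1 * y2 + d2)
    (hx : x1 * x2 = x2 * x1) (hy : y1 * y2 = y2 * y1 + e) :
    x1 * y1 * (x2 * y2) - x2 * y2 * (x1 * y1)
      = x2 * x1 * e + x1 * d1 * y2 - x2 * d2 * y1 := by
  calc x1 * y1 * (x2 * y2) - x2 * y2 * (x1 * y1)
      = (x1 * (y1 * x2)) * y2 - (x2 * (y2 * x1)) * y1 := by noncomm_ring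
    _ = (x1 * (x2 * y1 + d1)) * y2 - (x2 * (x1 * y2 + d2)) * y1 := by rw [h1, h2]
    _ = (x1 * x2) * (y1 * y2) + x1 * d1 * y2 - ((x2 * x1) * (y2 * y1) + x2 * d2 * y1) := by
        noncomm_ring
    _ = (x2 * x1) * (y2 * y1 + e) + x1 * d1 * y2 - ((x2 * x1) * (y2 * y1) + x2 * d2 * y1) := by
        rw [hy, hx]
    _ = x2 * x1 * e + x1 * d1 * y2 - x2 * d2 * y1 := by noncomm_ring


lemma eqAddZero {R : Type*} [Ring R] {a b : R} (h : a = b) : a = b + 0 := by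
  rw [add_zero]; exact h

lemma flipTop {R : Type*} [Ring R] {a b e : R} (h : a * b = b * a + -e) :
    b * a = a * b + e := by
  rw [h]; abel

lemma closer_a {R : Type*} [Ring R] (P P' : Prop) [Decidable P] [Decidable P']
    (x1 x2 y1 y2 : R) :
    x2 * x1 * 0 + x1 * (if P then 1 else 0) * y2 - x2 * (if P' then 1 else 0) * y1
      = (if P then x1 * y2 else 0) - (if P' then x2 * y1 else 0) := by
  split_ifs <;> simp

lemma closer_b1 {R : Type*} [Ring R] (P' : Prop) [Decidable P'] {x1 x2 y1 y2 : R}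
    (hx : x1 * x2 = x2 * x1) :
    x2 * x1 * -y2 + x1 * x2 * y2 - x2 * (if P' then 1 else 0) * y1
      = 0 - (if P' then x2 * y1 else 0) := by
  rw [← hx]
  split_ifs <;> simp [mul_neg]

lemma closer_b2 {R : Type*} [Ring R] (P' : Prop) [Decidable P'] (x1 y1 y2 : R) :
    -1 * x1 * -y2 + x1 * 0 * y2 - -1 * (if P' then 1 else 0) * y1
      = x1 * y2 - (if P' then -1 * y1 else 0) := by
  split_ifs <;> · noncomm_ring

lemma closer_c1 {R : Type*} [Ring R] (P : Prop) [Decidable P] (x1 x2 y1 y2 : R) :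
    x2 * x1 * y1 + x1 * (if P then 1 else 0) * y2 - x2 * x1 * y1
      = (if P then x1 * y2 else 0) - 0 := by
  split_ifs <;> simp

lemma closer_c2 {R : Type*} [Ring R] (P : Prop) [Decidable P] (x2 y1 y2 : R) :
    x2 * -1 * y1 + -1 * (if P then 1 else 0) * y2 - x2 * 0 * y1
      = (if P then -1 * y2 else 0) - x2 * y1 := by
  split_ifs <;> · noncomm_ring

lemma closer_d1 {R : Type*} [Ring R] (u v : R) : u * 0 + v - v = 0 - 0 := by simp

lemma closer_d2 {R : Type*} [Ring R] (x2 y1 : R) :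
    x2 * -1 * 0 + -1 * x2 * y1 - x2 * 0 * y1 = 0 - x2 * y1 := by noncomm_ring

lemma closer_d3 {R : Type*} [Ring R] (x1 y1 : R) :
    -1 * x1 * 0 + x1 * 0 * y1 - -1 * x1 * y1 = x1 * y1 - 0 := by noncomm_ring

lemma closer_d4 {R : Type*} [Ring R] (y1 : R) :
    -1 * -1 * 0 + -1 * 0 * y1 - -1 * 0 * y1 = -1 * y1 - -1 * y1 := by noncomm_ring

lemma Xh_top {k : Fin (n + 1)} (hk : ¬ (k : ℕ) < n) : Xh F n n1 k = -1 := by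
  unfold Xh; rw [dif_neg hk]

lemma key (i j k l : Fin (n + 1)) :
    Q F n n1 c i j * Q F n n1 c k l - Q F n n1 c k l * Q F n n1 c i j
      = (if j = k then Q F n n1 c i l else 0) - (if l = i then Q F n n1 c k j else 0) := by
  simp only [Q_eq]
  by_cases hj : (j : ℕ) < n <;> by_cases hl : (l : ℕ) < n
  · -- a : j < n, l < n
    refine (ring_calc _ _ _ _ _ _ _ (Yh_mul_Xh_lt F n n1 c j k hj) (Yh_mul_Xh_lt F n n1 c l i hl)
      (Xh_mul_Xh F n n1 i k) (Yh_mul_Yh_lt F n n1 c j l hj hl)).trans ?_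
    exact closer_a _ _ _ _ _ _
  · -- c : j < n, l = n
    have hy := flipTop (Yh_mul_Yh_top F n n1 c l j hl hj)
    by_cases hi : (i : ℕ) < n
    · refine (ring_calc _ _ _ _ _ _ _ (Yh_mul_Xh_lt F n n1 c j k hj)
        (Yh_mul_Xh_top F n n1 c l i hl hi) (Xh_mul_Xh F n n1 i k) hy).trans ?_
      rw [if_neg (show ¬ l = i from fun hc => hl (by rw [hc]; exact hi))]
      exact closer_c1 _ _ _ _ _
    · refine (ring_calc _ _ _ _ _ _ _ (Yh_mul_Xh_lt F n n1 c j k hj)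
        (eqAddZero (Yh_mul_Xh_right_top F n n1 c l i hi)) (Xh_mul_Xh F n n1 i k) hy).trans ?_
      rw [if_pos (show l = i from fin_eq_top n hl hi), Xh_top F n n1 hi]
      exact closer_c2 _ _ _ _
  · -- b : j = n, l < n
    have hy := Yh_mul_Yh_top F n n1 c j l hj hl
    by_cases hk : (k : ℕ) < n
    · refine (ring_calc _ _ _ _ _ _ _ (Yh_mul_Xh_top F n n1 c j k hj hk)
        (Yh_mul_Xh_lt F n n1 c l i hl) (Xh_mul_Xh F n n1 i k) hy).trans ?_
      rw [if_neg (show ¬ j = k from fun hc => hj (by rw [hc]; exact hk))]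
      exact closer_b1 _ (Xh_mul_Xh F n n1 i k)
    · refine (ring_calc _ _ _ _ _ _ _ (eqAddZero (Yh_mul_Xh_right_top F n n1 c j k hk))
        (Yh_mul_Xh_lt F n n1 c l i hl) (Xh_mul_Xh F n n1 i k) hy).trans ?_
      rw [if_pos (show j = k from fin_eq_top n hj hk), Xh_top F n n1 hk]
      exact closer_b2 _ _ _ _
  · -- d : j = n, l = n
    have hjl : j = l := fin_eq_top n hj hl
    subst hjl
    have hy : Yh F n n1 c j * Yh F n n1 c j = Yh F n n1 c j * Yh F n n1 c j + 0 :=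
      eqAddZero rfl
    by_cases hk : (k : ℕ) < n <;> by_cases hi : (i : ℕ) < n
    · refine (ring_calc _ _ _ _ _ _ _ (Yh_mul_Xh_top F n n1 c j k hj hk)
        (Yh_mul_Xh_top F n n1 c j i hj hi) (Xh_mul_Xh F n n1 i k) hy).trans ?_
      rw [if_neg (show ¬ j = k from fun hc => hj (by rw [hc]; exact hk)),
        if_neg (show ¬ j = i from fun hc => hj (by rw [hc]; exact hi)),
        Xh_mul_Xh F n n1 i k]
      exact closer_d1 _ _
    · refine (ring_calc _ _ _ _ _ _ _ (Yh_mul_Xh_top F n n1 c j k hj hk)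
        (eqAddZero (Yh_mul_Xh_right_top F n n1 c j i hi)) (Xh_mul_Xh F n n1 i k) hy).trans ?_
      rw [if_neg (show ¬ j = k from fun hc => hj (by rw [hc]; exact hk)),
        if_pos (show j = i from fin_eq_top n hj hi), Xh_top F n n1 hi]
      exact closer_d2 _ _
    · refine (ring_calc _ _ _ _ _ _ _ (eqAddZero (Yh_mul_Xh_right_top F n n1 c j k hk))
        (Yh_mul_Xh_top F n n1 c j i hj hi) (Xh_mul_Xh F n n1 i k) hy).trans ?_
      rw [if_pos (show j = k from fin_eq_top n hj hk),
        if_neg (show ¬ j = i from fun hc => hj (by rw [hc]; exact hi)), Xh_top F n n1 hk]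
      exact closer_d3 _ _
    · refine (ring_calc _ _ _ _ _ _ _ (eqAddZero (Yh_mul_Xh_right_top F n n1 c j k hk))
        (eqAddZero (Yh_mul_Xh_right_top F n n1 c j i hi)) (Xh_mul_Xh F n n1 i k) hy).trans ?_
      rw [if_pos (show j = k from fin_eq_top n hj hk),
        if_pos (show j = i from fin_eq_top n hj hi),
        Xh_top F n n1 hk, Xh_top F n n1 hi]
      exact closer_d4 _


/-- The candidate linear map on all matrices. -/
noncomputable def Lmap : Matrix (Fin (n + 1)) (Fin (n + 1)) F →ₗ[F]
    Module.End F (MvPolynomial (Fin n) F) where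
  toFun E := ∑ i : Fin (n + 1), ∑ j : Fin (n + 1), E i j • Q F n n1 c i j
  map_add' E E' := by
    rw [← Finset.sum_add_distrib]
    refine Finset.sum_congr rfl fun i _ => ?_
    rw [← Finset.sum_add_distrib]
    refine Finset.sum_congr rfl fun j _ => ?_
    rw [Matrix.add_apply, add_smul]
  map_smul' a E := by
    simp only [RingHom.id_apply]
    rw [Finset.smul_sum]
    refine Finset.sum_congr rfl fun i _ => ?_
    rw [Finset.smul_sum]
    refine Finset.sum_congr rfl fun j _ => ?_
    rw [Matrix.smul_apply, smul_smul, smul_eq_mul]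

lemma sum4_comm {M : Type*} [AddCommMonoid M] {ι : Type*} [Fintype ι]
    (f : ι → ι → ι → ι → M) :
    ∑ i, ∑ j, ∑ k, ∑ l, f i j k l = ∑ k, ∑ l, ∑ i, ∑ j, f i j k l := by
  calc ∑ i, ∑ j, ∑ k, ∑ l, f i j k l
      = ∑ i, ∑ k, ∑ j, ∑ l, f i j k l := Finset.sum_congr rfl fun i _ => Finset.sum_comm
    _ = ∑ k, ∑ i, ∑ j, ∑ l, f i j k l := Finset.sum_comm
    _ = ∑ k, ∑ i, ∑ l, ∑ j, f i j k l :=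
        Finset.sum_congr rfl fun k _ => Finset.sum_congr rfl fun i _ => Finset.sum_comm
    _ = ∑ k, ∑ l, ∑ i, ∑ j, f i j k l := Finset.sum_congr rfl fun k _ => Finset.sum_comm

lemma Lmap_apply (E : Matrix (Fin (n + 1)) (Fin (n + 1)) F) :
    Lmap F n n1 c E = ∑ i : Fin (n + 1), ∑ j : Fin (n + 1), E i j • Q F n n1 c i j := rfl

lemma Lmap_mul (E E' : Matrix (Fin (n + 1)) (Fin (n + 1)) F) :
    Lmap F n n1 c E * Lmap F n n1 c E'
      = ∑ i : Fin (n + 1), ∑ j : Fin (n + 1), ∑ k : Fin (n + 1), ∑ l : Fin (n + 1),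
          (E i j * E' k l) • (Q F n n1 c i j * Q F n n1 c k l) := by
  rw [Lmap_apply, Lmap_apply, Finset.sum_mul]
  refine Finset.sum_congr rfl fun i _ => ?_
  rw [Finset.sum_mul]
  refine Finset.sum_congr rfl fun j _ => ?_
  rw [Finset.mul_sum]
  refine Finset.sum_congr rfl fun k _ => ?_
  rw [Finset.mul_sum]
  refine Finset.sum_congr rfl fun l _ => ?_
  rw [smul_mul_assoc, mul_smul_comm, smul_smul]

lemma L1 (E E' : Matrix (Fin (n + 1)) (Fin (n + 1)) F) :
    ∑ i : Fin (n + 1), ∑ j : Fin (n + 1), ∑ k : Fin (n + 1), ∑ l : Fin (n + 1),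
        (E i j * E' k l) • (if j = k then Q F n n1 c i l else 0)
      = Lmap F n n1 c (E * E') := by
  rw [Lmap_apply]
  refine Finset.sum_congr rfl fun i _ => ?_
  calc ∑ j : Fin (n + 1), ∑ k : Fin (n + 1), ∑ l : Fin (n + 1),
        (E i j * E' k l) • (if j = k then Q F n n1 c i l else 0)
      = ∑ j : Fin (n + 1), ∑ l : Fin (n + 1), (E i j * E' j l) • Q F n n1 c i l := by
        refine Finset.sum_congr rfl fun j _ => ?_
        rw [Finset.sum_comm]
        refine Finset.sum_congr rfl fun l _ => ?_
        simp only [smul_ite_zero]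
        simp [Finset.sum_ite_eq]
    _ = ∑ l : Fin (n + 1), ∑ j : Fin (n + 1), (E i j * E' j l) • Q F n n1 c i l :=
        Finset.sum_comm
    _ = ∑ l : Fin (n + 1), ((E * E') i l) • Q F n n1 c i l := by
        refine Finset.sum_congr rfl fun l _ => ?_
        rw [Matrix.mul_apply, Finset.sum_smul]

lemma L2 (E E' : Matrix (Fin (n + 1)) (Fin (n + 1)) F) :
    ∑ i : Fin (n + 1), ∑ j : Fin (n + 1), ∑ k : Fin (n + 1), ∑ l : Fin (n + 1),
        (E i j * E' k l) • (if l = i then Q F n n1 c k j else 0)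
      = Lmap F n n1 c (E' * E) := by
  calc ∑ i : Fin (n + 1), ∑ j : Fin (n + 1), ∑ k : Fin (n + 1), ∑ l : Fin (n + 1),
        (E i j * E' k l) • (if l = i then Q F n n1 c k j else 0)
      = ∑ i : Fin (n + 1), ∑ j : Fin (n + 1), ∑ k : Fin (n + 1),
          (E i j * E' k i) • Q F n n1 c k j := by
        refine Finset.sum_congr rfl fun i _ => ?_
        refine Finset.sum_congr rfl fun j _ => ?_
        refine Finset.sum_congr rfl fun k _ => ?_
        simp only [smul_ite_zero]
        simp [Finset.sum_ite_eq']
    _ = ∑ i : Fin (n + 1), ∑ k : Fin (n + 1), ∑ j : Fin (n + 1),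
          (E i j * E' k i) • Q F n n1 c k j :=
        Finset.sum_congr rfl fun i _ => Finset.sum_comm
    _ = ∑ k : Fin (n + 1), ∑ i : Fin (n + 1), ∑ j : Fin (n + 1),
          (E i j * E' k i) • Q F n n1 c k j := Finset.sum_comm
    _ = ∑ k : Fin (n + 1), ∑ j : Fin (n + 1), ∑ i : Fin (n + 1),
          (E i j * E' k i) • Q F n n1 c k j :=
        Finset.sum_congr rfl fun k _ => Finset.sum_comm
    _ = ∑ k : Fin (n + 1), ∑ j : Fin (n + 1), ((E' * E) k j) • Q F n n1 c k j := by
        refine Finset.sum_congr rfl fun k _ => ?_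
        refine Finset.sum_congr rfl fun j _ => ?_
        rw [Matrix.mul_apply, Finset.sum_smul]
        exact Finset.sum_congr rfl fun x _ => by rw [mul_comm (E' k x) (E x j)]
    _ = Lmap F n n1 c (E' * E) := (Lmap_apply F n n1 c (E' * E)).symm

lemma sub4 {M : Type*} [AddCommGroup M] {ι : Type*} [Fintype ι]
    (f g : ι → ι → ι → ι → M) :
    ((∑ i, ∑ j, ∑ k, ∑ l, f i j k l) - ∑ i, ∑ j, ∑ k, ∑ l, g i j k l)
      = ∑ i, ∑ j, ∑ k, ∑ l, (f i j k l - g i j k l) := by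
  rw [← Finset.sum_sub_distrib]
  refine Finset.sum_congr rfl fun i _ => ?_
  rw [← Finset.sum_sub_distrib]
  refine Finset.sum_congr rfl fun j _ => ?_
  rw [← Finset.sum_sub_distrib]
  refine Finset.sum_congr rfl fun k _ => ?_
  rw [← Finset.sum_sub_distrib]

lemma Lmap_bracket (E E' : Matrix (Fin (n + 1)) (Fin (n + 1)) F) :
    Lmap F n n1 c (E * E' - E' * E)
      = Lmap F n n1 c E * Lmap F n n1 c E' - Lmap F n n1 c E' * Lmap F n n1 c E := by
  rw [map_sub, Lmap_mul, Lmap_mul,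
    sum4_comm (M := Module.End F (MvPolynomial (Fin n) F)) (ι := Fin (n + 1))
      (fun i j k l => (E' i j * E k l) • (Q F n n1 c i j * Q F n n1 c k l)),
    ← L1 F n n1 c E E', ← L2 F n n1 c E E',
    sub4 (fun i j k l => (E i j * E' k l) • (Q F n n1 c i j * Q F n n1 c k l))
      (fun i j k l => (E' k l * E i j) • (Q F n n1 c k l * Q F n n1 c i j)),
    sub4 (fun i j k l => (E i j * E' k l) • (if j = k then Q F n n1 c i l else 0))
      (fun i j k l => (E i j * E' k l) • (if l = i then Q F n n1 c k j else 0))]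
  refine Finset.sum_congr rfl fun i _ => ?_
  refine Finset.sum_congr rfl fun j _ => ?_
  refine Finset.sum_congr rfl fun k _ => ?_
  refine Finset.sum_congr rfl fun l _ => ?_
  rw [mul_comm (E' k l) (E i j)]
  exact ((smul_sub (E i j * E' k l) _ _).symm.trans
    ((congrArg (fun t => (E i j * E' k l) • t) (key F n n1 c i j k l).symm).trans
      (smul_sub _ _ _)))

end Aux

/-- for every `c ∈ F`, `E ↦ Σ_{i,j} e_{i,j} • Q_{i,j}` is a Lie algebra
homomorphism from `sl(n+1,F)` to the endomorphisms of `A` with the commutator bracket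
(in particular `E_{n,n} − E_{n+1,n+1}` is sent to
`Q_{n,n} − Q_{n+1,n+1} = D̃ + (c−n1)·id + x_n∂_n`). -/
theorem stmt_2 (F : Type*) [Field F] [CharZero F] (n n1 : ℕ) (hn : 2 ≤ n)
    (hn1 : 1 ≤ n1) (hn1n : n1 < n) (c : F) :
    ∃ π : ↥(LieAlgebra.SpecialLinear.sl (Fin (n + 1)) F) →ₗ⁅F⁆
        Module.End F (MvPolynomial (Fin n) F),
      ∀ E : ↥(LieAlgebra.SpecialLinear.sl (Fin (n + 1)) F),
        π E = ∑ i : Fin (n + 1), ∑ j : Fin (n + 1), (E.val i j) • Q F n n1 c i j := by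
  classical
  refine ⟨{ toLinearMap := ((Lmap F n n1 c).comp
              (LieAlgebra.SpecialLinear.sl (Fin (n + 1)) F).toSubmodule.subtype),
            map_lie' := ?_ },
    fun E => rfl⟩
  intro x y
  show Lmap F n n1 c ((⁅x, y⁆ : ↥(LieAlgebra.SpecialLinear.sl (Fin (n + 1)) F)) :
      Matrix (Fin (n + 1)) (Fin (n + 1)) F)
    = ⁅Lmap F n n1 c (x : Matrix (Fin (n + 1)) (Fin (n + 1)) F),
        Lmap F n n1 c (y : Matrix (Fin (n + 1)) (Fin (n + 1)) F)⁆
  rw [LieSubalgebra.coe_bracket, Ring.lie_def, Ring.lie_def]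
  exact Lmap_bracket F n n1 c _ _
end

section
/- Let ℓ be a nonnegative integer and c = −ℓ·1_F. Then the subspace A_(ℓ) of polynomials of total degree at most ℓ is invariant under every operator in the family Π_c. -/
open MvPolynomial

/-- The index set of the variables `x_0,x_1,…,x_m,y_1,…,y_m`:
`Sum.inl i` is `x_i` (`i = 0,…,m`) and `Sum.inr i` is `y_{i+1}` (`i = 0,…,m-1`). -/
abbrev SpIdx (m : ℕ) := Fin (m + 1) ⊕ Fin m

/-- Multiplication by `x_i` (`i = 0,…,m`). -/
noncomputable def mx (F : Type*) [Field F] (m : ℕ) (i : Fin (m + 1)) :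
    Module.End F (MvPolynomial (SpIdx m) F) :=
  LinearMap.mulLeft F (X (Sum.inl i))

/-- Multiplication by `y_{i+1}` (`i : Fin m`). -/
noncomputable def my (F : Type*) [Field F] (m : ℕ) (i : Fin m) :
    Module.End F (MvPolynomial (SpIdx m) F) :=
  LinearMap.mulLeft F (X (Sum.inr i))

/-- The partial derivative `∂_{x_i}`. -/
noncomputable def dx (F : Type*) [Field F] (m : ℕ) (i : Fin (m + 1)) :
    Module.End F (MvPolynomial (SpIdx m) F) :=
  (pderiv (Sum.inl i)).toLinearMap

/-- The partial derivative `∂_{y_{i+1}}`. -/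
noncomputable def dy (F : Type*) [Field F] (m : ℕ) (i : Fin m) :
    Module.End F (MvPolynomial (SpIdx m) F) :=
  (pderiv (Sum.inr i)).toLinearMap

/-- The Euler operator `D = Σ_{i=0}^m x_i ∂_{x_i} + Σ_{r=1}^m y_r ∂_{y_r}`. -/
noncomputable def Dsp (F : Type*) [Field F] (m : ℕ) :
    Module.End F (MvPolynomial (SpIdx m) F) :=
  ∑ i : Fin (m + 1), mx F m i * dx F m i + ∑ r : Fin m, my F m r * dy F m r

/-- The family `Π_c` of oscillator operators realizing the projective oscillator
representation `π_c` of `sp(2m+2,F)` on `A` (the paper's index `i ∈ {1,…,m}` is `i.succ`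
on the `x`-side and `i : Fin m` on the `y`-side). -/
noncomputable def PiFam (F : Type*) [Field F] (m : ℕ) (c : F) :
    Set (Module.End F (MvPolynomial (SpIdx m) F)) :=
  {T | (∃ i j : Fin m, T = mx F m i.succ * dx F m j.succ - my F m j * dy F m i) ∨
       (∃ i j : Fin m, T = mx F m i.succ * dy F m j + mx F m j.succ * dy F m i) ∨
       (∃ i j : Fin m, T = my F m i * dx F m j.succ + my F m j * dx F m i.succ) ∨
       T = -dx F m 0 ∨
       T = mx F m 0 * (Dsp F m + c • 1) ∨
       (∃ i : Fin m, T = mx F m 0 * dx F m i.succ - my F m i * (Dsp F m + c • 1)) ∨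
       (∃ i : Fin m, T = mx F m i.succ * dx F m 0 + dy F m i) ∨
       (∃ i : Fin m, T = my F m i * dx F m 0 - dx F m i.succ) ∨
       (∃ i : Fin m, T = mx F m 0 * dy F m i + mx F m i.succ * (Dsp F m + c • 1)) ∨
       T = Dsp F m + mx F m 0 * dx F m 0 + c • 1}


section AuxLemmas
variable {F : Type*} [Field F] {m : ℕ}

lemma degsum_eq (u : SpIdx m →₀ ℕ) : (u.sum fun _ e => e) = ∑ i, u i :=
  Finsupp.sum_fintype _ _ (fun _ => rfl)

lemma pderiv_support_le (j : SpIdx m) (f : MvPolynomial (SpIdx m) F)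
    (u : SpIdx m →₀ ℕ) (hu : u ∈ (pderiv j f).support) :
    (∑ i, u i) + 1 ≤ f.totalDegree := by
  classical
  have hco : coeff u (pderiv j f) ≠ 0 := mem_support_iff.mp hu
  have hrep : pderiv j f
      = ∑ v ∈ f.support, monomial (v - Finsupp.single j 1) (coeff v f * v j) := by
    conv_lhs => rw [f.as_sum, map_sum]
    simp [pderiv_monomial]
  rw [hrep, coeff_sum] at hco
  obtain ⟨v, hv, hvne⟩ := Finset.exists_ne_zero_of_sum_ne_zero hco
  rw [coeff_monomial] at hvne
  split_ifs at hvne with heq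
  · have hvj : 1 ≤ v j := by
      rcases Nat.eq_zero_or_pos (v j) with h | h
      · exfalso; apply hvne; rw [h]; ring
      · exact h
    have hvs : (∑ i, v i) ≤ f.totalDegree := by
      have := le_totalDegree hv
      rwa [degsum_eq] at this
    have hsum : (∑ i, u i) + 1 = ∑ i, v i := by
      subst heq
      have h1 : ∀ s : SpIdx m →₀ ℕ, ∑ i, s i = s j + ∑ i ∈ Finset.univ.erase j, s i :=
        fun s => (Finset.add_sum_erase _ _ (Finset.mem_univ j)).symm
      have h2 : ∀ i ∈ Finset.univ.erase j, (v - Finsupp.single j 1 : SpIdx m →₀ ℕ) i = v i := by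
        intro i hi
        rw [Finsupp.tsub_apply, Finsupp.single_apply,
          if_neg (Finset.ne_of_mem_erase hi).symm, Nat.sub_zero]
      have h3 : ∑ i ∈ Finset.univ.erase j, (v - Finsupp.single j 1 : SpIdx m →₀ ℕ) i
          = ∑ i ∈ Finset.univ.erase j, v i := Finset.sum_congr rfl h2
      rw [h1 (v - Finsupp.single j 1), h1 v, h3, Finsupp.tsub_apply, Finsupp.single_apply,
        if_pos rfl]
      omega
    omega
  · exact absurd rfl hvne

lemma mulX_totalDegree_le (j : SpIdx m) (g : MvPolynomial (SpIdx m) F) {ℓ : ℕ}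
    (h : ∀ u ∈ g.support, (∑ i, u i) + 1 ≤ ℓ) : (X j * g).totalDegree ≤ ℓ := by
  rcases eq_or_ne g 0 with rfl | hg
  · simp
  obtain ⟨u, hu⟩ := support_nonempty.mpr hg
  have hl : 1 ≤ ℓ := le_trans (by omega) (h u hu)
  have hg' : g.totalDegree ≤ ℓ - 1 := by
    rw [totalDegree]
    apply Finset.sup_le
    intro v hv
    have := h v hv
    rw [degsum_eq]
    omega
  calc (X j * g).totalDegree ≤ (X (R := F) j).totalDegree + g.totalDegree :=
        totalDegree_mul _ _
    _ ≤ ℓ := by rw [totalDegree_X]; omega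

lemma X_mul_pderiv_monomial (i : SpIdx m) (v : SpIdx m →₀ ℕ) (a : F) :
    X i * pderiv i (monomial v a) = monomial v (a * v i) := by
  rw [pderiv_monomial]
  rcases Nat.eq_zero_or_pos (v i) with h | h
  · simp [h]
  · have hX : (X i : MvPolynomial (SpIdx m) F) = monomial (Finsupp.single i 1) 1 := rfl
    have hv : Finsupp.single i 1 + (v - Finsupp.single i 1) = v := by
      ext k
      simp only [Finsupp.add_apply, Finsupp.tsub_apply, Finsupp.single_apply]
      split_ifs with h'
      · subst h'; omega
      · omega
    rw [hX, monomial_mul, one_mul, hv]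

lemma Dsp_apply (f : MvPolynomial (SpIdx m) F) :
    Dsp F m f = ∑ i : SpIdx m, X i * pderiv i f := by
  rw [Fintype.sum_sum_type, Dsp]
  simp only [LinearMap.add_apply, LinearMap.coe_sum, Finset.sum_apply, Module.End.mul_apply,
    mx, my, dx, dy, LinearMap.mulLeft_apply, Derivation.coeFn_coe]

lemma coeff_Dsp (f : MvPolynomial (SpIdx m) F) (u : SpIdx m →₀ ℕ) :
    coeff u (Dsp F m f) = ((∑ i, u i : ℕ) : F) * coeff u f := by
  induction f using MvPolynomial.induction_on' with
  | monomial v a =>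
    rw [Dsp_apply, coeff_sum]
    simp only [_root_.X_mul_pderiv_monomial, coeff_monomial]
    rcases eq_or_ne v u with rfl | hvu
    · simp only [if_pos rfl]
      rw [Nat.cast_sum, Finset.sum_mul]
      exact Finset.sum_congr rfl fun i _ => mul_comm _ _
    · simp [if_neg hvu]
  | add p q hp hq =>
    rw [map_add, coeff_add, coeff_add, hp, hq, mul_add]

variable {ℓ : ℕ} {f : MvPolynomial (SpIdx m) F}

lemma xpd_le (i j : SpIdx m) (hf : f.totalDegree ≤ ℓ) :
    (X i * pderiv j f).totalDegree ≤ ℓ :=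
  mulX_totalDegree_le i _ fun u hu => (pderiv_support_le j f u hu).trans hf

lemma pd_le (j : SpIdx m) (hf : f.totalDegree ≤ ℓ) : (pderiv j f).totalDegree ≤ ℓ := by
  rw [totalDegree]
  apply Finset.sup_le
  intro u hu
  have h := (pderiv_support_le j f u hu).trans hf
  rw [degsum_eq]
  omega

lemma Dsp_le (hf : f.totalDegree ≤ ℓ) : (Dsp F m f).totalDegree ≤ ℓ := by
  rw [totalDegree]
  apply Finset.sup_le
  intro u hu
  have h := mem_support_iff.mp hu
  rw [coeff_Dsp] at h
  have h1 : coeff u f ≠ 0 := right_ne_zero_of_mul h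
  exact (le_totalDegree (mem_support_iff.mpr h1)).trans hf

lemma key_le [CharZero F] (j : SpIdx m) (hf : f.totalDegree ≤ ℓ) :
    (X j * (Dsp F m f + (-(ℓ : F)) • f)).totalDegree ≤ ℓ := by
  apply mulX_totalDegree_le
  intro u hu
  have hco := mem_support_iff.mp hu
  rw [coeff_add, coeff_Dsp, coeff_smul] at hco
  have hcf : coeff u f ≠ 0 := by
    intro h'; apply hco; rw [h']; simp
  have hle : (∑ i, u i) ≤ ℓ := by
    have h2 := (le_totalDegree (mem_support_iff.mpr hcf)).trans hf
    rwa [degsum_eq] at h2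
  have hne : (∑ i, u i) ≠ ℓ := by
    intro h'; apply hco
    rw [h', smul_eq_mul]
    ring
  omega

end AuxLemmas

/-- for `c = -ℓ` with `ℓ ∈ ℕ`, the subspace `A_(ℓ)` of polynomials of total
degree at most `ℓ` is invariant under every operator of the family `Π_c`. -/
theorem stmt_10 (F : Type*) [Field F] [CharZero F] (m : ℕ) (hm : 1 ≤ m) (ℓ : ℕ) :
    ∀ T ∈ PiFam F m (-(ℓ : F)), ∀ f ∈ restrictTotalDegree (SpIdx m) F ℓ,
      T f ∈ restrictTotalDegree (SpIdx m) F ℓ := by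
  intro T hT f hf
  rw [mem_restrictTotalDegree] at hf
  have hkey : ∀ j : SpIdx m, X j * (Dsp F m f + (-(ℓ : F)) • f)
      ∈ restrictTotalDegree (SpIdx m) F ℓ :=
    fun j => (mem_restrictTotalDegree _ _ _).mpr (key_le j hf)
  have hxpd : ∀ i j : SpIdx m, X i * pderiv j f ∈ restrictTotalDegree (SpIdx m) F ℓ :=
    fun i j => (mem_restrictTotalDegree _ _ _).mpr (xpd_le i j hf)
  have hpd : ∀ j : SpIdx m, pderiv j f ∈ restrictTotalDegree (SpIdx m) F ℓ :=
    fun j => (mem_restrictTotalDegree _ _ _).mpr (pd_le j hf)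
  have hD : Dsp F m f ∈ restrictTotalDegree (SpIdx m) F ℓ :=
    (mem_restrictTotalDegree _ _ _).mpr (Dsp_le hf)
  have hf' : f ∈ restrictTotalDegree (SpIdx m) F ℓ :=
    (mem_restrictTotalDegree _ _ _).mpr hf
  rcases hT with ⟨i, j, rfl⟩ | ⟨i, j, rfl⟩ | ⟨i, j, rfl⟩ | rfl | rfl | ⟨i, rfl⟩ | ⟨i, rfl⟩ |
    ⟨i, rfl⟩ | ⟨i, rfl⟩ | rfl <;>
    simp only [LinearMap.sub_apply, LinearMap.add_apply, Module.End.mul_apply,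
      LinearMap.neg_apply, LinearMap.smul_apply, Module.End.one_apply, mx, my, dx, dy,
      LinearMap.mulLeft_apply, Derivation.coeFn_coe]
  · exact Submodule.sub_mem _ (hxpd _ _) (hxpd _ _)
  · exact Submodule.add_mem _ (hxpd _ _) (hxpd _ _)
  · exact Submodule.add_mem _ (hxpd _ _) (hxpd _ _)
  · exact Submodule.neg_mem _ (hpd _)
  · exact hkey _
  · exact Submodule.sub_mem _ (hxpd _ _) (hkey _)
  · exact Submodule.add_mem _ (hxpd _ _) (hpd _)
  · exact Submodule.sub_mem _ (hxpd _ _) (hpd _)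
  · exact Submodule.add_mem _ (hxpd _ _) (hkey _)
  · exact Submodule.add_mem _ (Submodule.add_mem _ hD (hxpd _ _)) (Submodule.smul_mem _ _ hf')
end
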